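/- Let μ ≤ λ be infinite cardinals with μ regular. Then λ is μ-closed (θ^{<μ} < λ for all θ < λ) if and only if: (a) there is an unbounded set S ⊆ λ of cardinals each of which is almost μ-closed, and (b) λ is not the successor of a cardinal of cofinality less than μ. -/

import Mathlib

open Cardinal

universe u

/-- A cardinal `ν` is almost `μ`-closed if `θ^{<μ} ≤ ν` for all `θ < ν`. -/
def AlmostMuClosed (μ ν : Cardinal.{u}) : Prop := ∀ θ < ν, θ ^< μ ≤ ν

/-! The forward direction: `θ^{<μ}` is itself almost `μ`-closed, and by König's theorem
`θ < θ^{cf θ} ≤ θ^{<μ}` when `cf θ < μ`, so `λ = θ⁺` would give `θ^{<μ} ≥ λ`.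
For the converse, every `θ` with `θ⁺ < λ` lies below some almost `μ`-closed `ν < λ`. The remaining
case `λ = θ⁺` has `cf θ ≥ μ`, so a function from `κ < μ` into `θ` is bounded below `θ`, whence
`θ^κ ≤ θ · sup_{σ<θ} σ^κ ≤ θ`. -/

lemma Cardinal.le_powerlt_self {μ : Cardinal.{u}} (hμ : 1 < μ) (θ : Cardinal.{u}) :
    θ ≤ θ ^< μ := by
  simpa using le_powerlt θ hμ

lemma Cardinal.exists_lt_power_of_lt_powerlt {σ θ μ : Cardinal.{u}} (h : σ < θ ^< μ) :
    ∃ κ < μ, σ < θ ^ κ := by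
  simpa [powerlt_le] using h.not_ge

lemma almostMuClosed_powerlt {μ : Cardinal.{u}} (hμ : ℵ₀ ≤ μ) (θ : Cardinal.{u}) :
    AlmostMuClosed μ (θ ^< μ) := by
  intro σ hσ
  obtain ⟨κ, hκ, hσκ⟩ := exists_lt_power_of_lt_powerlt hσ
  refine powerlt_le.2 fun ρ hρ => ?_
  calc σ ^ ρ ≤ (θ ^ κ) ^ ρ := power_le_power_right hσκ.le
    _ = θ ^ (κ * ρ) := power_mul.symm
    _ ≤ θ ^< μ := le_powerlt θ (mul_lt_of_lt hμ hκ hρ)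

lemma Cardinal.lt_powerlt_of_cof_lt {θ μ : Cardinal.{u}} (hθ : ℵ₀ ≤ θ) (h : θ.ord.cof < μ) :
    θ < θ ^< μ :=
  (lt_power_cof_ord hθ).trans_le (le_powerlt θ h)

lemma Order.exists_forall_lt_of_mk_lt_cof {α ι : Type u} [LinearOrder α] (f : ι → α)
    (hι : #ι < Order.cof α) : ∃ a, ∀ i, f i < a := by
  by_contra! hf
  have hcofinal : IsCofinal (Set.range f) := fun a => by
    obtain ⟨i, hi⟩ := hf a
    exact ⟨f i, Set.mem_range_self i, hi⟩
  exact ((Order.cof_le hcofinal).trans mk_range_le).not_gt hι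

lemma Cardinal.mk_arrow_le_mul_iSup_of_mk_lt_cof {α ι : Type u} [LinearOrder α]
    (hι : #ι < Order.cof α) : #(ι → α) ≤ #α * ⨆ a : α, #(ι → Set.Iio a) := by
  choose bound hbound using fun f : ι → α => Order.exists_forall_lt_of_mk_lt_cof f hι
  have hinj : Function.Injective
      (fun f : ι → α => (⟨bound f, fun i => ⟨f i, hbound f i⟩⟩ : Σ a : α, ι → Set.Iio a)) := by
    intro f g hfg
    funext i
    exact congrArg (fun p : Σ a : α, ι → Set.Iio a => (p.2 i : α)) hfg
  calc #(ι → α) ≤ #(Σ a : α, ι → Set.Iio a) := mk_le_of_injective hinj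
    _ = sum fun a : α => #(ι → Set.Iio a) := mk_sigma _
    _ ≤ #α * ⨆ a : α, #(ι → Set.Iio a) := sum_le_mk_mul_iSup _

lemma Cardinal.power_le_self_of_lt_cof {θ κ : Cardinal.{u}} (hθ : ℵ₀ ≤ θ)
    (hκ : κ < θ.ord.cof) (h : ∀ σ < θ, σ ^ κ ≤ θ) : θ ^ κ ≤ θ := by
  have hcard : #θ.ord.ToType = θ := by rw [mk_toType, card_ord]
  have hcof : #κ.out < Order.cof θ.ord.ToType := by rwa [mk_out, Ordinal.cof_toType]
  have hsup : ⨆ a : θ.ord.ToType, #(κ.out → Set.Iio a) ≤ θ := ciSup_le' fun a => by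
    rw [← power_def, mk_out]
    exact h _ ((mk_Iio_lt a (by rw [hcard, Ordinal.type_toType])).trans_eq hcard)
  calc θ ^ κ = #(κ.out → θ.ord.ToType) := by rw [← power_def, hcard, mk_out]
    _ ≤ #θ.ord.ToType * ⨆ a : θ.ord.ToType, #(κ.out → Set.Iio a) :=
      mk_arrow_le_mul_iSup_of_mk_lt_cof hcof
    _ ≤ θ * θ := by rw [hcard]; exact mul_le_mul' le_rfl hsup
    _ = θ := mul_eq_self hθ

lemma AlmostMuClosed.powerlt_le_self {μ θ : Cardinal.{u}} (hθ : AlmostMuClosed μ θ)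
    (hθ₀ : ℵ₀ ≤ θ) (hμ : μ ≤ θ.ord.cof) : θ ^< μ ≤ θ :=
  powerlt_le.2 fun _ hκ => power_le_self_of_lt_cof hθ₀ (hκ.trans_le hμ) fun σ hσ =>
    (le_powerlt σ hκ).trans (hθ σ hσ)

theorem stmt6_general (μ l : Cardinal.{u}) (hμ : μ.IsRegular) (hl : ℵ₀ ≤ l) :
    (∀ θ < l, θ ^< μ < l) ↔
      ((∃ S : Set Cardinal.{u},
          (∀ ν ∈ S, ν < l ∧ AlmostMuClosed μ ν) ∧ ∀ θ < l, ∃ ν ∈ S, θ ≤ ν) ∧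
        ¬ ∃ l₀ : Cardinal.{u}, l = Order.succ l₀ ∧ l₀.ord.cof < μ) := by
  have hμ₀ : ℵ₀ ≤ μ := hμ.aleph0_le
  constructor
  · refine fun h => ⟨⟨{ν | ν < l ∧ AlmostMuClosed μ ν}, fun ν hν => hν, fun θ hθ =>
      ⟨θ ^< μ, ⟨h θ hθ, almostMuClosed_powerlt hμ₀ θ⟩,
        le_powerlt_self (one_lt_aleph0.trans_le hμ₀) θ⟩⟩, ?_⟩
    rintro ⟨θ, rfl, hcof⟩
    have hθ : θ < θ ^< μ := lt_powerlt_of_cof_lt (isSuccLimit_aleph0.le_succ_iff.1 hl) hcof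
    exact (h θ (Order.lt_succ θ)).not_ge (Order.succ_le_of_lt hθ)
  · rintro ⟨⟨S, hS, hS_unbounded⟩, hnotsucc⟩
    have below_succ_lt : ∀ θ, Order.succ θ < l → θ ^< μ < l := fun θ hθ => by
      obtain ⟨ν, hνS, hθν⟩ := hS_unbounded _ hθ
      exact ((hS ν hνS).2 θ ((Order.lt_succ θ).trans_le hθν)).trans_lt (hS ν hνS).1
    intro θ hθ
    rcases (Order.succ_le_of_lt hθ).lt_or_eq with hlt | rfl
    · exact below_succ_lt θ hlt
    have hclosed : AlmostMuClosed μ θ := fun σ hσ =>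
      Order.lt_succ_iff.1 (below_succ_lt σ (Order.succ_lt_succ hσ))
    have hcof : μ ≤ θ.ord.cof := not_lt.1 fun hcof => hnotsucc ⟨θ, rfl, hcof⟩
    exact (hclosed.powerlt_le_self (isSuccLimit_aleph0.le_succ_iff.1 hl) hcof).trans_lt
      (Order.lt_succ θ)

/-- `λ` is `μ`-closed iff (a) there is an unbounded set of almost `μ`-closed cardinals
below `λ` and (b) `λ` is not the successor of a cardinal of cofinality less than `μ`. -/
theorem stmt6 (μ l : Cardinal.{u}) (hμ : μ.IsRegular) (hl : ℵ₀ ≤ l) (hμl : μ ≤ l) :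
    (∀ θ < l, θ ^< μ < l) ↔
      ((∃ S : Set Cardinal.{u},
          (∀ ν ∈ S, ν < l ∧ AlmostMuClosed μ ν) ∧ ∀ θ < l, ∃ ν ∈ S, θ ≤ ν) ∧
        ¬ ∃ l₀ : Cardinal.{u}, l = Order.succ l₀ ∧ l₀.ord.cof < μ) :=
  stmt6_general μ l hμ hl
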